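/- If the initial energy is negative, i.e. 2φ′(0)² + c(φ(0)⁴ − 2φ(0)²) < 0, then φ does not tend to 0 as t → +∞; consequently either φ(t) → 1 or φ(t) → −1 as t → +∞. -/

import Mathlib

/-!
Along a solution the energy `E = φ'²/2 + c (φ⁴/4 - φ²/2)` satisfies `E' = -k φ'² ≤ 0`. Since
`E(0) < 0`, the state `(φ, φ')` stays in the compact sublevel set `{E ≤ 0}`, so `E` converges and
every polynomial expression in `(φ, φ')` is bounded. Barbalat's lemma, applied to `E` and then to
`φ'`, gives `φ' → 0` and `φ'' → 0`, hence `φ³ - φ → 0` by the equation. The bound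
`c φ²/2 ≥ -E(0) > 0` keeps `φ` away from `0`, so `φ` has a constant sign and tends to `±1`.
-/

open Filter Set Topology NNReal

theorem abs_le_abs_slope_add_of_lipschitzOnWith {f g : ℝ → ℝ} {a t δ : ℝ} {K : ℝ≥0}
    (hf : ∀ s ∈ Ici a, HasDerivAt f (g s) s) (hg : LipschitzOnWith K g (Ici a))
    (ht : a ≤ t) (hδ : 0 < δ) :
    |g t| ≤ |(f (t + δ) - f t) / δ| + K * δ := by
  obtain ⟨ξ, hξ, hslope⟩ := exists_hasDerivAt_eq_slope f g (lt_add_of_pos_right t hδ)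
    (fun s hs => (hf s (ht.trans hs.1)).continuousAt.continuousWithinAt)
    (fun s hs => hf s (ht.trans hs.1.le))
  rw [add_sub_cancel_left] at hslope
  have hclose : |g t - g ξ| ≤ K * δ := by
    have hdist := hg.dist_le_mul t ht ξ (ht.trans hξ.1.le)
    rw [Real.dist_eq, Real.dist_eq, abs_sub_comm t, abs_of_pos (sub_pos.2 hξ.1)] at hdist
    exact hdist.trans (mul_le_mul_of_nonneg_left (by linarith [hξ.2]) K.coe_nonneg)
  rw [← hslope]
  linarith [abs_sub_abs_le_abs_sub (g t) (g ξ)]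

/-- Barbalat's lemma. -/
theorem tendsto_zero_of_hasDerivAt_of_lipschitzOnWith {f g : ℝ → ℝ} {a L : ℝ} {K : ℝ≥0}
    (hf : ∀ s ∈ Ici a, HasDerivAt f (g s) s) (hg : LipschitzOnWith K g (Ici a))
    (hlim : Tendsto f atTop (𝓝 L)) : Tendsto g atTop (𝓝 0) := by
  rw [Metric.tendsto_nhds]
  intro ε hε
  set δ := ε / (2 * (K + 1)) with hδ_def
  have hδ : 0 < δ := by positivity
  have hKδ : K * δ < ε / 2 := by
    have : (K + 1) * δ = ε / 2 := by rw [hδ_def]; field_simp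
    nlinarith
  have hslope : Tendsto (fun t => (f (t + δ) - f t) / δ) atTop (𝓝 0) := by
    simpa using ((hlim.comp (tendsto_atTop_add_const_right _ δ tendsto_id)).sub hlim).div_const δ
  filter_upwards [Metric.tendsto_nhds.mp hslope (ε / 2) (half_pos hε), eventually_ge_atTop a]
    with t hsmall hta
  rw [Real.dist_eq, sub_zero] at hsmall ⊢
  linarith [abs_le_abs_slope_add_of_lipschitzOnWith hf hg hta hδ]

theorem exists_lipschitzOnWith_of_hasDerivAt_of_mapsTo {X : Type*} [TopologicalSpace X]
    {s : Set ℝ} {K : Set X} {γ : ℝ → X} {P : X → ℝ} {g : ℝ → ℝ} (hs : Convex ℝ s)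
    (hK : IsCompact K) (hγ : MapsTo γ s K) (hP : Continuous P)
    (hg : ∀ t ∈ s, HasDerivAt g (P (γ t)) t) : ∃ C, LipschitzOnWith C g s := by
  obtain ⟨C, hC⟩ := hK.exists_bound_of_continuousOn hP.continuousOn
  refine ⟨C.toNNReal, hs.lipschitzOnWith_of_nnnorm_hasDerivWithin_le
    (fun t ht => (hg t ht).hasDerivWithinAt) fun t ht => ?_⟩
  rw [← NNReal.coe_le_coe, coe_nnnorm, Real.coe_toNNReal']
  exact le_max_of_le_left (hC _ (hγ ht))

theorem AntitoneOn.exists_tendsto_atTop {f : ℝ → ℝ} {a m : ℝ} (hf : AntitoneOn f (Ici a))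
    (hm : ∀ t, m ≤ f t) : ∃ L, Tendsto f atTop (𝓝 L) := by
  have hanti : Antitone fun t => f (max t a) := fun s t hst =>
    hf (le_max_right s a) (le_max_right t a) (max_le_max hst le_rfl)
  refine ⟨_, (tendsto_atTop_ciInf hanti ⟨m, ?_⟩).congr' ?_⟩
  · rintro _ ⟨t, rfl⟩
    exact hm _
  · filter_upwards [eventually_ge_atTop a] with t ht
    rw [max_eq_left ht]

theorem IsPreconnected.forall_pos_or_forall_neg {X : Type*} [TopologicalSpace X] {s : Set X}
    {f : X → ℝ} (hs : IsPreconnected s) (hf : ContinuousOn f s) (hne : ∀ t ∈ s, f t ≠ 0) :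
    (∀ t ∈ s, 0 < f t) ∨ ∀ t ∈ s, f t < 0 := by
  by_contra! h
  obtain ⟨⟨a, ha, hfa⟩, ⟨b, hb, hfb⟩⟩ := h
  obtain ⟨t, ht, hft⟩ := hs.intermediate_value ha hb hf ⟨hfa, hfb⟩
  exact hne t ht hft

theorem tendsto_zero_of_tendsto_sq {α : Type*} {l : Filter α} {u : α → ℝ}
    (h : Tendsto (fun t => u t ^ 2) l (𝓝 0)) : Tendsto u l (𝓝 0) := by
  rw [tendsto_zero_iff_abs_tendsto_zero]
  simpa [Function.comp_def, Real.sqrt_sq_eq_abs] using (Real.continuous_sqrt.tendsto 0).comp h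

theorem tendsto_one_of_tendsto_cube_sub_self {α : Type*} {l : Filter α} {y : α → ℝ} {δ : ℝ}
    (hδ : 0 < δ) (hy : ∀ᶠ t in l, 0 < y t ∧ δ ≤ y t ^ 2)
    (h : Tendsto (fun t => y t ^ 3 - y t) l (𝓝 0)) : Tendsto y l (𝓝 1) := by
  have hdist : Tendsto (fun t => |y t - 1|) l (𝓝 0) := by
    refine squeeze_zero' (Eventually.of_forall fun t => abs_nonneg _) ?_
      (by simpa using h.abs.div_const δ)
    filter_upwards [hy] with t ⟨hpos, hsq⟩
    rw [le_div_iff₀ hδ, show y t ^ 3 - y t = (y t - 1) * (y t * (y t + 1)) by ring, abs_mul,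
      abs_of_pos (by positivity : 0 < y t * (y t + 1))]
    exact mul_le_mul_of_nonneg_left (by nlinarith) (abs_nonneg _)
  simpa using ((tendsto_zero_iff_abs_tendsto_zero _).2 hdist).add_const 1

noncomputable def duffingEnergy (c x v : ℝ) : ℝ := v ^ 2 / 2 + c * (x ^ 4 / 4 - x ^ 2 / 2)

noncomputable def duffingAccel (k c x v : ℝ) : ℝ := -k * v - c * (x ^ 3 - x)

section Energy

variable {c x v e : ℝ}

theorem neg_quarter_le_duffingEnergy (hc : 0 ≤ c) : -(c / 4) ≤ duffingEnergy c x v := by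
  unfold duffingEnergy
  nlinarith [sq_nonneg v, mul_nonneg hc (sq_nonneg (x ^ 2 - 1))]

theorem neg_two_mul_div_le_sq_of_duffingEnergy_le (hc : 0 < c) (h : duffingEnergy c x v ≤ e) :
    -(2 * e) / c ≤ x ^ 2 := by
  unfold duffingEnergy at h
  rw [div_le_iff₀ hc]
  nlinarith [sq_nonneg v, mul_nonneg hc.le (pow_nonneg (sq_nonneg x) 2)]

theorem isCompact_duffingEnergy_nonpos (hc : 0 < c) :
    IsCompact {p : ℝ × ℝ | duffingEnergy c p.1 p.2 ≤ 0} := by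
  refine ((isCompact_Icc (a := (-2 : ℝ)) (b := 2)).prod
    (isCompact_Icc (a := -(1 + c)) (b := 1 + c))).of_isClosed_subset
    (isClosed_le (by unfold duffingEnergy; fun_prop) continuous_const) ?_
  rintro ⟨x, v⟩ h
  simp only [mem_ofPred_eq, duffingEnergy] at h
  have hx : x ^ 2 ≤ 2 := by
    by_contra! hx
    nlinarith [mul_pos hc (mul_pos (by positivity : 0 < x ^ 2) (by linarith : 0 < x ^ 2 - 2)),
      sq_nonneg v]
  have hv : v ^ 2 ≤ (1 + c) ^ 2 := by nlinarith [mul_nonneg hc.le (sq_nonneg (x ^ 2 - 1))]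
  exact ⟨abs_le_of_sq_le_sq' (by linarith) (by norm_num),
    abs_le_of_sq_le_sq' hv (by linarith)⟩

end Energy

section Trajectory

variable {k c : ℝ} {x v : ℝ → ℝ}

theorem hasDerivAt_duffingEnergy {t : ℝ} (hxt : HasDerivAt x (v t) t)
    (hvt : HasDerivAt v (duffingAccel k c (x t) (v t)) t) :
    HasDerivAt (fun s => duffingEnergy c (x s) (v s)) (-k * v t ^ 2) t := by
  refine (((hvt.pow 2).div_const 2).add
    ((((hxt.pow 4).div_const 4).sub ((hxt.pow 2).div_const 2)).const_mul c)).congr_deriv ?_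
  unfold duffingAccel
  ring

theorem hasDerivAt_duffingAccel {t : ℝ} (hxt : HasDerivAt x (v t) t)
    (hvt : HasDerivAt v (duffingAccel k c (x t) (v t)) t) :
    HasDerivAt (fun s => duffingAccel k c (x s) (v s))
      (-k * duffingAccel k c (x t) (v t) - c * ((3 * x t ^ 2 - 1) * v t)) t := by
  refine ((hvt.const_mul (-k)).sub (((hxt.pow 3).sub hxt).const_mul c)).congr_deriv ?_
  ring

theorem antitoneOn_duffingEnergy (hk : 0 ≤ k) (hx : ∀ t ∈ Ici (0 : ℝ), HasDerivAt x (v t) t)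
    (hv : ∀ t ∈ Ici (0 : ℝ), HasDerivAt v (duffingAccel k c (x t) (v t)) t) :
    AntitoneOn (fun t => duffingEnergy c (x t) (v t)) (Ici 0) := by
  have hE t (ht : t ∈ Ici (0 : ℝ)) := hasDerivAt_duffingEnergy (hx t ht) (hv t ht)
  refine antitoneOn_of_hasDerivWithinAt_nonpos (convex_Ici 0)
    (fun t ht => (hE t ht).continuousAt.continuousWithinAt)
    (fun t ht => (hE t (interior_subset ht)).hasDerivWithinAt) fun t _ => ?_
  nlinarith [sq_nonneg (v t)]

theorem mapsTo_duffingEnergy_nonpos (hk : 0 ≤ k) (hx : ∀ t ∈ Ici (0 : ℝ), HasDerivAt x (v t) t)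
    (hv : ∀ t ∈ Ici (0 : ℝ), HasDerivAt v (duffingAccel k c (x t) (v t)) t)
    (hE : duffingEnergy c (x 0) (v 0) ≤ 0) :
    MapsTo (fun t => (x t, v t)) (Ici 0) {p | duffingEnergy c p.1 p.2 ≤ 0} := fun _ ht =>
  (antitoneOn_duffingEnergy hk hx hv self_mem_Ici ht ht).trans hE

theorem tendsto_duffing_velocity_zero (hk : 0 < k) (hc : 0 < c)
    (hx : ∀ t ∈ Ici (0 : ℝ), HasDerivAt x (v t) t)
    (hv : ∀ t ∈ Ici (0 : ℝ), HasDerivAt v (duffingAccel k c (x t) (v t)) t)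
    (hE : duffingEnergy c (x 0) (v 0) ≤ 0) : Tendsto v atTop (𝓝 0) := by
  obtain ⟨L, hL⟩ := (antitoneOn_duffingEnergy hk.le hx hv).exists_tendsto_atTop
    fun _ => neg_quarter_le_duffingEnergy hc.le
  obtain ⟨K, hK⟩ := exists_lipschitzOnWith_of_hasDerivAt_of_mapsTo (convex_Ici 0)
    (isCompact_duffingEnergy_nonpos hc) (mapsTo_duffingEnergy_nonpos hk.le hx hv hE)
    (P := fun p => -k * (2 * p.2 ^ 1 * duffingAccel k c p.1 p.2))
    (by unfold duffingAccel; fun_prop) (g := fun t => -k * v t ^ 2)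
    fun t ht => ((hv t ht).pow 2).const_mul (-k)
  refine tendsto_zero_of_tendsto_sq ?_
  simpa [hk.ne'] using (tendsto_zero_of_hasDerivAt_of_lipschitzOnWith
    (fun t ht => hasDerivAt_duffingEnergy (hx t ht) (hv t ht)) hK hL).const_mul (-k⁻¹)

theorem tendsto_duffingAccel_zero (hk : 0 < k) (hc : 0 < c)
    (hx : ∀ t ∈ Ici (0 : ℝ), HasDerivAt x (v t) t)
    (hv : ∀ t ∈ Ici (0 : ℝ), HasDerivAt v (duffingAccel k c (x t) (v t)) t)
    (hE : duffingEnergy c (x 0) (v 0) ≤ 0) :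
    Tendsto (fun t => duffingAccel k c (x t) (v t)) atTop (𝓝 0) := by
  obtain ⟨K, hK⟩ := exists_lipschitzOnWith_of_hasDerivAt_of_mapsTo (convex_Ici 0)
    (isCompact_duffingEnergy_nonpos hc) (mapsTo_duffingEnergy_nonpos hk.le hx hv hE)
    (P := fun p => -k * duffingAccel k c p.1 p.2 - c * ((3 * p.1 ^ 2 - 1) * p.2))
    (by unfold duffingAccel; fun_prop) fun t ht => hasDerivAt_duffingAccel (hx t ht) (hv t ht)
  exact tendsto_zero_of_hasDerivAt_of_lipschitzOnWith hv hK
    (tendsto_duffing_velocity_zero hk hc hx hv hE)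

theorem tendsto_cube_sub_self_zero_of_duffing (hk : 0 < k) (hc : 0 < c)
    (hx : ∀ t ∈ Ici (0 : ℝ), HasDerivAt x (v t) t)
    (hv : ∀ t ∈ Ici (0 : ℝ), HasDerivAt v (duffingAccel k c (x t) (v t)) t)
    (hE : duffingEnergy c (x 0) (v 0) ≤ 0) :
    Tendsto (fun t => x t ^ 3 - x t) atTop (𝓝 0) := by
  have hlim := ((tendsto_duffingAccel_zero hk hc hx hv hE).add
    ((tendsto_duffing_velocity_zero hk hc hx hv hE).const_mul k)).const_mul (-c⁻¹)
  rw [mul_zero, add_zero, mul_zero] at hlim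
  refine hlim.congr fun t => ?_
  unfold duffingAccel
  field_simp
  ring

theorem tendsto_duffing_one_or_neg_one (hk : 0 < k) (hc : 0 < c)
    (hx : ∀ t ∈ Ici (0 : ℝ), HasDerivAt x (v t) t)
    (hv : ∀ t ∈ Ici (0 : ℝ), HasDerivAt v (duffingAccel k c (x t) (v t)) t)
    (hE : duffingEnergy c (x 0) (v 0) < 0) :
    Tendsto x atTop (𝓝 1) ∨ Tendsto x atTop (𝓝 (-1)) := by
  set δ := -(2 * duffingEnergy c (x 0) (v 0)) / c
  have hδ : 0 < δ := div_pos (by linarith) hc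
  have hanti := antitoneOn_duffingEnergy hk.le hx hv
  have hsq : ∀ t ∈ Ici (0 : ℝ), δ ≤ x t ^ 2 := fun t ht =>
    neg_two_mul_div_le_sq_of_duffingEnergy_le hc (hanti self_mem_Ici ht ht)
  have hcube := tendsto_cube_sub_self_zero_of_duffing hk hc hx hv hE.le
  have hnonneg := eventually_ge_atTop (0 : ℝ)
  rcases isPreconnected_Ici.forall_pos_or_forall_neg
    (fun t ht => (hx t ht).continuousAt.continuousWithinAt)
    (fun t ht h0 => by nlinarith [hsq t ht, h0]) with hxpos | hxneg
  · refine .inl (tendsto_one_of_tendsto_cube_sub_self hδ ?_ hcube)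
    filter_upwards [hnonneg] with t ht
    exact ⟨hxpos t ht, hsq t ht⟩
  · have hneg_lim : Tendsto (fun t => -x t) atTop (𝓝 1) := by
      refine tendsto_one_of_tendsto_cube_sub_self hδ ?_ ?_
      · filter_upwards [hnonneg] with t ht
        exact ⟨neg_pos.2 (hxneg t ht), by simpa using hsq t ht⟩
      · have hcube_neg := hcube.neg
        rw [neg_zero] at hcube_neg
        exact hcube_neg.congr fun t => by ring
    exact .inr (by simpa using hneg_lim.neg)

end Trajectory

/-- If the initial energy of a solution of the damped Duffing equation is negative,
i.e. `2 φ'(0)² + c (φ(0)⁴ − 2 φ(0)²) < 0`, then `φ` does not tend to `0` as `t → +∞`;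
consequently either `φ(t) → 1` or `φ(t) → −1` as `t → +∞`. -/
theorem duffing_nontrivial_limit (k c : ℝ) (hk : 0 < k) (hc : 0 < c)
    (φ : ℝ → ℝ) (hφ : Differentiable ℝ φ) (hφ' : Differentiable ℝ (deriv φ))
    (hode : ∀ t : ℝ, 0 ≤ t →
      deriv (deriv φ) t + k * deriv φ t + c * ((φ t) ^ 3 - φ t) = 0)
    (hneg : 2 * (deriv φ 0) ^ 2 + c * ((φ 0) ^ 4 - 2 * (φ 0) ^ 2) < 0) :
    ¬ Tendsto φ atTop (nhds 0) ∧
      (Tendsto φ atTop (nhds 1) ∨ Tendsto φ atTop (nhds (-1))) := by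
  have hv : ∀ t ∈ Ici (0 : ℝ),
      HasDerivAt (deriv φ) (duffingAccel k c (φ t) (deriv φ t)) t := fun t ht =>
    (hφ' t).hasDerivAt.congr_deriv (by unfold duffingAccel; linarith [hode t ht])
  have hE : duffingEnergy c (φ 0) (deriv φ 0) < 0 := by
    unfold duffingEnergy
    linarith
  have hlim := tendsto_duffing_one_or_neg_one hk hc (fun t _ => (hφ t).hasDerivAt) hv hE
  refine ⟨fun h0 => ?_, hlim⟩
  rcases hlim with h | h <;> exact absurd (tendsto_nhds_unique h0 h) (by norm_num)
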